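/- arXiv:2005.04168 — 5 statements merged into one kernel-verified Lean document; each statement's English description precedes it below -/
import Mathlib

section
/- Lemma (Equivalence of C-EP and EP in the limit of small learning rate). Assume Φ : ℝⁿ × ℝᵖ → ℝ is twice continuously differentiable and ℓ : ℝⁿ → ℝ is continuously differentiable, fix θ ∈ ℝᵖ, a steady state s_* = ∇_sΦ(s_*, θ), and β > 0. Then for every t ≥ 0, as η → 0⁺ one has s_t^{β,η} → s_t^β and θ_t^{β,η} → θ, and consequently lim_{η→0⁺} Δ_s^{C-EP}(β, η, t) = Δ_s^{EP}(β, t) and lim_{η→0⁺} Δ_θ^{C-EP}(β, η, t) = Δ_θ^{EP}(β, t). -/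
/-! One C-EP step is `(s, θ) ↦ (g_S (s, θ), θ + (η / β) • (g_T (s', θ) - g_T (s, θ)))`, where
`s' = g_S (s, θ)` and `g_S`, `g_T` are continuous because partial gradients of a `C¹` function are.
At `η = 0` this is the EP step with `θ` frozen, so by induction on `t` the C-EP trajectory tends to
the EP trajectory as `η → 0`. Divided by `η`, the parameter increment is exactly
`β⁻¹ • (g_T (s_{t+1}, θ_t) - g_T (s_t, θ_t))`, whose limit is the EP parameter update. -/

open Filter Topology

variable {n p : ℕ}
local notation "𝕊" => EuclideanSpace ℝ (Fin n)
local notation "𝕋" => EuclideanSpace ℝ (Fin p)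

section Gradient

variable {E F : Type*} [NormedAddCommGroup E] [NormedAddCommGroup F]

theorem ContDiff.continuous_gradient [InnerProductSpace ℝ E] [CompleteSpace E] {f : E → ℝ}
    (hf : ContDiff ℝ 1 f) : Continuous (gradient f) :=
  (InnerProductSpace.toDual ℝ E).symm.continuous.comp (hf.continuous_fderiv one_ne_zero)

theorem ContDiff.continuous_gradient_left [InnerProductSpace ℝ E] [CompleteSpace E]
    [NormedSpace ℝ F] {Φ : E → F → ℝ} (hΦ : ContDiff ℝ 1 (fun q : E × F => Φ q.1 q.2)) :
    Continuous (fun q : E × F => gradient (fun x => Φ x q.2) q.1) := by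
  have hpartial (q : E × F) : gradient (fun x => Φ x q.2) q.1 =
      (InnerProductSpace.toDual ℝ E).symm
        ((fderiv ℝ (fun q : E × F => Φ q.1 q.2) q).comp (ContinuousLinearMap.inl ℝ E F)) := by
    have hq : HasFDerivAt (fun x => Φ x q.2)
        ((fderiv ℝ (fun q : E × F => Φ q.1 q.2) q).comp (ContinuousLinearMap.inl ℝ E F)) q.1 :=
      ((hΦ.differentiable one_ne_zero q).hasFDerivAt.comp q.1
        (hasFDerivAt_prodMk_left (𝕜 := ℝ) q.1 q.2) :)
    rw [gradient, hq.fderiv]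
  simp_rw [hpartial]
  exact (InnerProductSpace.toDual ℝ E).symm.continuous.comp
    ((hΦ.continuous_fderiv one_ne_zero).clm_comp continuous_const)

theorem ContDiff.continuous_gradient_right [NormedSpace ℝ E] [InnerProductSpace ℝ F]
    [CompleteSpace F] {Φ : E → F → ℝ} (hΦ : ContDiff ℝ 1 (fun q : E × F => Φ q.1 q.2)) :
    Continuous (fun q : E × F => gradient (fun y => Φ q.1 y) q.2) :=
  (ContDiff.continuous_gradient_left (Φ := fun y x => Φ x y)
    (hΦ.comp (contDiff_snd.prodMk contDiff_fst))).comp continuous_swap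

end Gradient

section Trajectory

variable {S T : Type*} [NormedAddCommGroup T] [NormedSpace ℝ T]
  {gS : S × T → S} {gT : S × T → T} {β : ℝ} {θ : T}
  {sEP : ℕ → S} {St : ℝ → ℕ → S} {Tt : ℝ → ℕ → T}

theorem inv_smul_sub_eq_of_step (hTrec : ∀ η t, Tt η (t + 1) =
      Tt η t + (η / β) • (gT (St η (t + 1), Tt η t) - gT (St η t, Tt η t)))
    {η : ℝ} (hη : η ≠ 0) (t : ℕ) :
    η⁻¹ • (Tt η (t + 1) - Tt η t) = β⁻¹ • (gT (St η (t + 1), Tt η t) - gT (St η t, Tt η t)) := by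
  rw [hTrec, add_sub_cancel_left, smul_smul, inv_mul_eq_div, div_div_cancel_left' hη]

theorem tendsto_trajectory_of_step [TopologicalSpace S]
    (hgS : Continuous gS) (hgT : Continuous gT)
    (hS0 : ∀ η, St η 0 = sEP 0) (hT0 : ∀ η, Tt η 0 = θ)
    (hsEP : ∀ t, sEP (t + 1) = gS (sEP t, θ))
    (hSrec : ∀ η t, St η (t + 1) = gS (St η t, Tt η t))
    (hTrec : ∀ η t, Tt η (t + 1) =
      Tt η t + (η / β) • (gT (St η (t + 1), Tt η t) - gT (St η t, Tt η t)))
    (t : ℕ) :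
    Tendsto (fun η => St η t) (𝓝 0) (𝓝 (sEP t)) ∧ Tendsto (fun η => Tt η t) (𝓝 0) (𝓝 θ) := by
  induction t with
  | zero => simp only [hS0, hT0]; exact ⟨tendsto_const_nhds, tendsto_const_nhds⟩
  | succ t ih =>
    obtain ⟨hS, hT⟩ := ih
    have hS' : Tendsto (fun η => St η (t + 1)) (𝓝 0) (𝓝 (sEP (t + 1))) := by
      simpa only [hSrec, hsEP, Function.comp_def] using (hgS.tendsto _).comp (hS.prodMk_nhds hT)
    refine ⟨hS', ?_⟩
    have hrate : Tendsto (fun η : ℝ => η / β) (𝓝 0) (𝓝 0) := by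
      simpa using (continuous_id.div_const β).tendsto 0
    have hdiff := ((hgT.tendsto _).comp (hS'.prodMk_nhds hT)).sub
      ((hgT.tendsto _).comp (hS.prodMk_nhds hT))
    simpa only [hTrec, zero_smul, add_zero, Function.comp_def] using hT.add (hrate.smul hdiff)

theorem tendsto_inv_smul_param_step [TopologicalSpace S]
    (hgS : Continuous gS) (hgT : Continuous gT)
    (hS0 : ∀ η, St η 0 = sEP 0) (hT0 : ∀ η, Tt η 0 = θ)
    (hsEP : ∀ t, sEP (t + 1) = gS (sEP t, θ))
    (hSrec : ∀ η t, St η (t + 1) = gS (St η t, Tt η t))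
    (hTrec : ∀ η t, Tt η (t + 1) =
      Tt η t + (η / β) • (gT (St η (t + 1), Tt η t) - gT (St η t, Tt η t)))
    (t : ℕ) :
    Tendsto (fun η => η⁻¹ • (Tt η (t + 1) - Tt η t)) (𝓝[≠] 0)
      (𝓝 (β⁻¹ • (gT (sEP (t + 1), θ) - gT (sEP t, θ)))) := by
  obtain ⟨hS, hT⟩ := tendsto_trajectory_of_step hgS hgT hS0 hT0 hsEP hSrec hTrec t
  have hS' := (tendsto_trajectory_of_step hgS hgT hS0 hT0 hsEP hSrec hTrec (t + 1)).1
  have hdiff := ((hgT.tendsto _).comp (hS'.prodMk_nhds hT)).sub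
    ((hgT.tendsto _).comp (hS.prodMk_nhds hT))
  refine ((hdiff.const_smul β⁻¹).mono_left nhdsWithin_le_nhds).congr' ?_
  filter_upwards [self_mem_nhdsWithin] with η hη
  exact (inv_smul_sub_eq_of_step hTrec hη t).symm

end Trajectory

theorem cep_eq_ep_small_lr_general
    (Φ : 𝕊 → 𝕋 → ℝ) (ℓ : 𝕊 → ℝ)
    (hΦ : ContDiff ℝ 2 (fun q : 𝕊 × 𝕋 => Φ q.1 q.2))
    (hℓ : ContDiff ℝ 1 ℓ)
    (θ : 𝕋) (sstar : 𝕊)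
    (β : ℝ)
    -- EP second-phase trajectory
    (sEP : ℕ → 𝕊)
    (hsEP0 : sEP 0 = sstar)
    (hsEPrec : ∀ t, sEP (t+1) = gradient (fun s => Φ s θ) (sEP t) - β • gradient ℓ (sEP t))
    -- C-EP second-phase trajectory
    (St : ℝ → ℕ → 𝕊) (Tt : ℝ → ℕ → 𝕋)
    (hS0 : ∀ η, St η 0 = sstar)
    (hT0 : ∀ η, Tt η 0 = θ)
    (hSrec : ∀ η t, St η (t+1)
      = gradient (fun s => Φ s (Tt η t)) (St η t) - β • gradient ℓ (St η t))
    (hTrec : ∀ η t, Tt η (t+1)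
      = Tt η t + (η / β) • (gradient (fun θ' => Φ (St η (t+1)) θ') (Tt η t)
          - gradient (fun θ' => Φ (St η t) θ') (Tt η t)))
    (t : ℕ) :
    Tendsto (fun η => St η t) (𝓝[>] (0:ℝ)) (𝓝 (sEP t))
    ∧ Tendsto (fun η => Tt η t) (𝓝[>] (0:ℝ)) (𝓝 θ)
    ∧ Tendsto (fun η => β⁻¹ • (St η (t+1) - St η t)) (𝓝[>] (0:ℝ))
        (𝓝 (β⁻¹ • (sEP (t+1) - sEP t)))
    ∧ Tendsto (fun η => η⁻¹ • (Tt η (t+1) - Tt η t)) (𝓝[>] (0:ℝ))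
        (𝓝 (β⁻¹ • (gradient (fun θ' => Φ (sEP (t+1)) θ') θ
            - gradient (fun θ' => Φ (sEP t) θ') θ))) := by
  have hΦ₁ : ContDiff ℝ 1 (fun q : 𝕊 × 𝕋 => Φ q.1 q.2) := hΦ.of_le one_le_two
  have hgS : Continuous fun q : 𝕊 × 𝕋 => gradient (fun s => Φ s q.2) q.1 - β • gradient ℓ q.1 :=
    hΦ₁.continuous_gradient_left.sub
      ((hℓ.continuous_gradient.comp continuous_fst).const_smul β)
  have hS0' (η : ℝ) : St η 0 = sEP 0 := (hS0 η).trans hsEP0.symm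
  have hlim := tendsto_trajectory_of_step hgS hΦ₁.continuous_gradient_right hS0' hT0 hsEPrec
    hSrec hTrec
  refine ⟨(hlim t).1.mono_left nhdsWithin_le_nhds, (hlim t).2.mono_left nhdsWithin_le_nhds,
    (((hlim (t + 1)).1.sub (hlim t).1).const_smul β⁻¹).mono_left nhdsWithin_le_nhds, ?_⟩
  exact (tendsto_inv_smul_param_step hgS hΦ₁.continuous_gradient_right hS0' hT0 hsEPrec hSrec
    hTrec t).mono_left (nhdsGT_le_nhdsNE 0)

/-- **Lemma (Equivalence of C-EP and EP in the limit of small learning rate).**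
For fixed β > 0, as η → 0⁺ the C-EP trajectory converges pointwise to the EP trajectory
(with frozen parameter θ), and the C-EP normalized updates converge to those of EP. -/
theorem cep_eq_ep_small_lr
    (Φ : 𝕊 → 𝕋 → ℝ) (ℓ : 𝕊 → ℝ)
    (hΦ : ContDiff ℝ 2 (fun q : 𝕊 × 𝕋 => Φ q.1 q.2))
    (hℓ : ContDiff ℝ 1 ℓ)
    (θ : 𝕋) (sstar : 𝕊)
    (hfix : sstar = gradient (fun s => Φ s θ) sstar)
    (β : ℝ) (hβ : 0 < β)
    -- EP second-phase trajectory
    (sEP : ℕ → 𝕊)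
    (hsEP0 : sEP 0 = sstar)
    (hsEPrec : ∀ t, sEP (t+1) = gradient (fun s => Φ s θ) (sEP t) - β • gradient ℓ (sEP t))
    -- C-EP second-phase trajectory
    (St : ℝ → ℕ → 𝕊) (Tt : ℝ → ℕ → 𝕋)
    (hS0 : ∀ η, St η 0 = sstar)
    (hT0 : ∀ η, Tt η 0 = θ)
    (hSrec : ∀ η t, St η (t+1)
      = gradient (fun s => Φ s (Tt η t)) (St η t) - β • gradient ℓ (St η t))
    (hTrec : ∀ η t, Tt η (t+1)
      = Tt η t + (η / β) • (gradient (fun θ' => Φ (St η (t+1)) θ') (Tt η t)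
          - gradient (fun θ' => Φ (St η t) θ') (Tt η t)))
    (t : ℕ) :
    Tendsto (fun η => St η t) (𝓝[>] (0:ℝ)) (𝓝 (sEP t))
    ∧ Tendsto (fun η => Tt η t) (𝓝[>] (0:ℝ)) (𝓝 θ)
    ∧ Tendsto (fun η => β⁻¹ • (St η (t+1) - St η t)) (𝓝[>] (0:ℝ))
        (𝓝 (β⁻¹ • (sEP (t+1) - sEP t)))
    ∧ Tendsto (fun η => η⁻¹ • (Tt η (t+1) - Tt η t)) (𝓝[>] (0:ℝ))
        (𝓝 (β⁻¹ • (gradient (fun θ' => Φ (sEP (t+1)) θ') θ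
            - gradient (fun θ' => Φ (sEP t) θ') θ))) :=
  cep_eq_ep_small_lr_general Φ ℓ hΦ hℓ θ sstar β sEP hsEP0 hsEPrec St Tt hS0 hT0 hSrec hTrec t
end

section
/- Lemma (Equivalence of BPTT and RBP). Let F : ℝⁿ × ℝᵖ → ℝⁿ be continuously differentiable, ℓ : ℝⁿ → ℝ be differentiable, and fix θ ∈ ℝᵖ. Let s_0, …, s_T be a trajectory (s_{k+1} = F(s_k, θ)) and suppose there exists 0 < K ≤ T with s_{T−K} = s_{T−K+1} = … = s_T = s_*. Then for every 0 ≤ t ≤ K the gradient at s_{T−t} of the map s ↦ ℓ(G_θ^{∘t}(s)) equals ∇_s^{RBP}(t) = ((D_sF(s_*, θ))ᵀ)ᵗ ∇ℓ(s_*), and for every 1 ≤ t ≤ K the gradient at θ of the map θ' ↦ ℓ(G_θ^{∘(t−1)}(F(s_{T−t}, θ'))) equals ∇_θ^{RBP}(t) = (D_θF(s_*, θ))ᵀ ∇_s^{RBP}(t−1). -/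
/-!
At a steady state `s⋆ = G_θ(s⋆)` of the trajectory every iterate `G_θ^[t]` fixes `s⋆`, so by the
chain rule its derivative there is `(D_sF(s⋆, θ))ᵗ`. Since the trajectory sits at `s⋆` for its last
`K` steps, the BPTT gradients are gradients at `s⋆` of `ℓ ∘ G_θ^[t]` (and of `ℓ ∘ G_θ^[t-1] ∘ F(s⋆, ·)`),
and taking adjoints turns the chain rule into the RBP recursion.
-/

open Filter Topology

variable {n p : ℕ}
local notation "𝕊" => EuclideanSpace ℝ (Fin n)
local notation "𝕋" => EuclideanSpace ℝ (Fin p)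

open ContinuousLinearMap

section Gradient

variable {E E' : Type*} [NormedAddCommGroup E] [InnerProductSpace ℝ E] [CompleteSpace E]
  [NormedAddCommGroup E'] [InnerProductSpace ℝ E'] [CompleteSpace E']

theorem gradient_comp {f : E → E'} {g : E' → ℝ} {x : E} (hg : DifferentiableAt ℝ g (f x))
    (hf : DifferentiableAt ℝ f x) :
    gradient (g ∘ f) x = adjoint (fderiv ℝ f x) (gradient g (f x)) := by
  refine ext_inner_right ℝ fun v => ?_
  rw [inner_gradient_left, adjoint_inner_left, inner_gradient_left, fderiv_comp x hg hf]
  rfl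

theorem gradient_comp_iterate_of_isFixedPt {G : E → E} {g : E → ℝ} {x : E}
    (hg : DifferentiableAt ℝ g x) (hG : DifferentiableAt ℝ G x) (hx : Function.IsFixedPt G x)
    (t : ℕ) :
    gradient (g ∘ G^[t]) x = (adjoint (fderiv ℝ G x) ^ t) (gradient g x) := by
  have hGt : HasFDerivAt G^[t] (fderiv ℝ G x ^ t) x := hG.hasFDerivAt.iterate hx t
  rw [gradient_comp ((hx.iterate t).symm ▸ hg) hGt.differentiableAt, hGt.fderiv,
    (hx.iterate t).eq, ← star_eq_adjoint, ← star_eq_adjoint, star_pow]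

end Gradient

/-- **Lemma (Equivalence of BPTT and RBP).** Along a trajectory that has settled at the
steady state `s⋆` for its last K steps, the first K BPTT gradients coincide with the
RBP gradients. -/
theorem bptt_eq_rbp
    (F : 𝕊 → 𝕋 → 𝕊) (ℓ : 𝕊 → ℝ)
    (hF : ContDiff ℝ 1 (fun q : 𝕊 × 𝕋 => F q.1 q.2))
    (hℓ : Differentiable ℝ ℓ)
    (θ : 𝕋) (T K : ℕ) (hK : 0 < K) (hKT : K ≤ T)
    (s : ℕ → 𝕊) (htraj : ∀ k < T, s (k+1) = F (s k) θ)
    (sstar : 𝕊) (hsteady : ∀ k, T - K ≤ k → k ≤ T → s k = sstar) :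
    (∀ t ≤ K,
      gradient (fun x => ℓ ((fun x' => F x' θ)^[t] x)) (s (T - t))
        = ((ContinuousLinearMap.adjoint (fderiv ℝ (fun x => F x θ) sstar)) ^ t)
            (gradient ℓ sstar))
    ∧ (∀ t, 1 ≤ t → t ≤ K →
      gradient (fun θ' => ℓ ((fun x' => F x' θ)^[t-1] (F (s (T - t)) θ'))) θ
        = ContinuousLinearMap.adjoint (fderiv ℝ (fun θ' => F sstar θ') θ)
            (((ContinuousLinearMap.adjoint (fderiv ℝ (fun x => F x θ) sstar)) ^ (t-1))
              (gradient ℓ sstar))) := by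
  have hFd := hF.differentiable one_ne_zero
  have hG : DifferentiableAt ℝ (fun x => F x θ) sstar :=
    hFd.differentiableAt.comp sstar (differentiableAt_id.prodMk (differentiableAt_const θ))
  have hFθ : DifferentiableAt ℝ (fun θ' => F sstar θ') θ :=
    hFd.differentiableAt.comp θ ((differentiableAt_const sstar).prodMk differentiableAt_id)
  have hsettled : ∀ t ≤ K, s (T - t) = sstar := fun t ht =>
    hsteady _ (Nat.sub_le_sub_left ht T) (Nat.sub_le T t)
  have hfix : Function.IsFixedPt (fun x => F x θ) sstar := by
    have hstep := htraj (T - K) (by omega)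
    rw [hsteady _ le_rfl (Nat.sub_le T K), hsteady _ (Nat.le_succ _) (by omega)] at hstep
    exact hstep.symm
  have hrbp := gradient_comp_iterate_of_isFixedPt (hℓ sstar) hG hfix
  refine ⟨fun t ht => hsettled t ht ▸ hrbp t, fun t _ ht => ?_⟩
  have hiter : DifferentiableAt ℝ (ℓ ∘ (fun x => F x θ)^[t - 1]) sstar :=
    (hℓ _).comp sstar (hG.hasFDerivAt.iterate hfix _).differentiableAt
  have hchain := gradient_comp (hfix.eq.symm ▸ hiter) hFθ
  rw [show F sstar θ = sstar from hfix] at hchain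
  rw [hsettled t ht, ← hrbp]
  exact hchain
end

section
/- Proposition (RBP optimizes the steady-state loss). Let F : ℝⁿ × ℝᵖ → ℝⁿ be continuously differentiable and ℓ : ℝⁿ → ℝ differentiable. Suppose σ : ℝᵖ → ℝⁿ is differentiable at θ₀ and satisfies σ(θ) = F(σ(θ), θ) for all θ in a neighborhood of θ₀; set s_* = σ(θ₀), and assume the operator norm of D_sF(s_*, θ₀) is strictly less than 1. Then the series Σ_{t=1}^∞ ∇_θ^{RBP}(t) converges and equals the gradient at θ₀ of the steady-state loss θ ↦ ℓ(σ(θ)). -/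
/-!
Differentiating the steady-state identity `σ θ = F (σ θ) θ` at `θ₀` gives
`(1 - A) ∘ Dσ = B` with `A = DₛF(s⋆, θ₀)` and `B = D_θF(s⋆, θ₀)`. Taking adjoints,
`Dσᵀ ∘ (1 - Aᵀ) = Bᵀ`, and since `‖Aᵀ‖ = ‖A‖ < 1` the Neumann series `Σ (Aᵀ)ᵗ` inverts `1 - Aᵀ`.
Hence `Σ Bᵀ (Aᵀ)ᵗ ∇ℓ(s⋆) = Dσᵀ ∇ℓ(s⋆)`, which is the gradient of `ℓ ∘ σ` at `θ₀` by the chain rule.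
-/

open Filter Topology

variable {n p : ℕ}
local notation "𝕊" => EuclideanSpace ℝ (Fin n)
local notation "𝕋" => EuclideanSpace ℝ (Fin p)

namespace ContinuousLinearMap

theorem hasSum_pow_apply_of_comp_one_sub_eq {𝕜 E G : Type*} [NontriviallyNormedField 𝕜]
    [NormedAddCommGroup E] [NormedSpace 𝕜 E] [CompleteSpace E]
    [NormedAddCommGroup G] [NormedSpace 𝕜 G]
    {A : E →L[𝕜] E} (hA : ‖A‖ < 1) {B C : E →L[𝕜] G} (hCB : C ∘L (1 - A) = B) (g : E) :
    HasSum (fun t : ℕ => B ((A ^ t) g)) (C g) := by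
  have hgeom := ((summable_geometric_of_norm_lt_one hA).hasSum.mapL (apply 𝕜 E g)).mapL B
  have hlimit : B ((∑' t : ℕ, A ^ t) g) = C g := by
    rw [← hCB, comp_apply, ← mul_apply_eq_comp, mul_neg_geom_series A hA, one_apply_eq_self]
  simpa only [apply_apply, hlimit] using hgeom

end ContinuousLinearMap

theorem one_sub_fderiv_comp_fderiv_eq_of_eventually_fixed {𝕜 S P : Type*}
    [NontriviallyNormedField 𝕜] [NormedAddCommGroup S] [NormedSpace 𝕜 S]
    [NormedAddCommGroup P] [NormedSpace 𝕜 P] {F : S → P → S} {σ : P → S} {θ₀ : P}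
    (hF : DifferentiableAt 𝕜 (fun q : S × P => F q.1 q.2) (σ θ₀, θ₀))
    (hσ : DifferentiableAt 𝕜 σ θ₀) (hfix : σ =ᶠ[𝓝 θ₀] fun θ => F (σ θ) θ) :
    (1 - fderiv 𝕜 (fun s => F s θ₀) (σ θ₀)) ∘L fderiv 𝕜 σ θ₀ =
      fderiv 𝕜 (fun θ => F (σ θ₀) θ) θ₀ := by
  set D := fderiv 𝕜 (fun q : S × P => F q.1 q.2) (σ θ₀, θ₀)
  have hleft : HasFDerivAt (fun s => F s θ₀) (D ∘L .inl 𝕜 S P) (σ θ₀) :=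
    hF.hasFDerivAt.comp (f := fun s => (s, θ₀)) (σ θ₀) (hasFDerivAt_prodMk_left _ _)
  have hright : HasFDerivAt (fun θ => F (σ θ₀) θ) (D ∘L .inr 𝕜 S P) θ₀ :=
    hF.hasFDerivAt.comp (f := fun θ => (σ θ₀, θ)) θ₀ (hasFDerivAt_prodMk_right _ _)
  have hchain : HasFDerivAt (fun θ => F (σ θ) θ) (D ∘L (fderiv 𝕜 σ θ₀).prod (.id 𝕜 P)) θ₀ :=
    hF.hasFDerivAt.comp (f := fun θ => (σ θ, θ)) θ₀ (hσ.hasFDerivAt.prodMk (hasFDerivAt_id θ₀))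
  ext v
  have hv : fderiv 𝕜 σ θ₀ v = D (fderiv 𝕜 σ θ₀ v, v) :=
    DFunLike.congr_fun (hfix.fderiv_eq.trans hchain.fderiv) v
  rw [hleft.fderiv, hright.fderiv, ContinuousLinearMap.comp_apply, sub_apply,
    one_apply_eq_self, sub_eq_iff_eq_add']
  exact hv.trans (D.comp_inl_add_comp_inr _).symm

theorem gradient_comp_s6 {𝕜 E H : Type*} [RCLike 𝕜]
    [NormedAddCommGroup E] [InnerProductSpace 𝕜 E] [CompleteSpace E]
    [NormedAddCommGroup H] [InnerProductSpace 𝕜 H] [CompleteSpace H]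
    {ℓ : H → 𝕜} {σ : E → H} {x : E}
    (hℓ : DifferentiableAt 𝕜 ℓ (σ x)) (hσ : DifferentiableAt 𝕜 σ x) :
    gradient (fun y => ℓ (σ y)) x =
      ContinuousLinearMap.adjoint (fderiv 𝕜 σ x) (gradient ℓ (σ x)) := by
  refine ext_inner_right 𝕜 fun v => ?_
  rw [inner_gradient_left, ContinuousLinearMap.adjoint_inner_left, inner_gradient_left,
    fderiv_fun_comp x hℓ hσ, ContinuousLinearMap.comp_apply]

/-- **Proposition (RBP optimizes the steady-state loss).** If `σ` is a differentiable
branch of steady states near `θ₀` and `‖DₛF(s⋆,θ₀)‖ < 1`, then the series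
`Σ_{t≥1} ∇θᴿᴮᴾ(t) = Σ_{t≥0} (DθF(s⋆,θ₀))ᵀ ((DₛF(s⋆,θ₀))ᵀ)ᵗ ∇ℓ(s⋆)` converges to the
gradient at `θ₀` of the steady-state loss `θ ↦ ℓ(σ(θ))`. -/
theorem rbp_optimizes_steady_state_loss
    (F : 𝕊 → 𝕋 → 𝕊) (ℓ : 𝕊 → ℝ)
    (hF : ContDiff ℝ 1 (fun q : 𝕊 × 𝕋 => F q.1 q.2))
    (hℓ : Differentiable ℝ ℓ)
    (θ₀ : 𝕋) (σ : 𝕋 → 𝕊)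
    (hσdiff : DifferentiableAt ℝ σ θ₀)
    (hσfix : ∀ᶠ θ in 𝓝 θ₀, σ θ = F (σ θ) θ)
    (sstar : 𝕊) (hs : sstar = σ θ₀)
    (hnorm : ‖fderiv ℝ (fun x => F x θ₀) sstar‖ < 1) :
    HasSum (fun t : ℕ =>
        ContinuousLinearMap.adjoint (fderiv ℝ (fun θ' => F sstar θ') θ₀)
          (((ContinuousLinearMap.adjoint (fderiv ℝ (fun x => F x θ₀) sstar)) ^ t)
            (gradient ℓ sstar)))
      (gradient (fun θ => ℓ (σ θ)) θ₀) := by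
  subst hs
  have hFdiff : DifferentiableAt ℝ (fun q : 𝕊 × 𝕋 => F q.1 q.2) (σ θ₀, θ₀) :=
    hF.differentiable one_ne_zero _
  rw [gradient_comp_s6 (hℓ _) hσdiff]
  refine ContinuousLinearMap.hasSum_pow_apply_of_comp_one_sub_eq
    (by rwa [LinearIsometryEquiv.norm_map]) ?_ _
  rw [← one_sub_fderiv_comp_fderiv_eq_of_eventually_fixed hFdiff hσdiff hσfix,
    ContinuousLinearMap.adjoint_comp, map_sub, ContinuousLinearMap.adjoint_one]
end

section
/- Toy-model C-EP closed form. In the toy C-EP dynamics, if additionally 1 − η/(2β) + 2β ≠ 0, then for all t ≥ 0: s_t = (θ/(1 − η/(2β) + 2β)) · (1 − η/(2β) + 2β · (1/2)ᵗ (1 − 2β + η/(2β))ᵗ). -/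
/-! Along the dynamics `θ_t - (η/(2β)) s_t` is conserved, so eliminating `θ_t` leaves the affine
recursion `s_{t+1} = r s_t + (1 - η/(2β)) θ / 2` with `r = (1 - 2β + η/(2β)) / 2`. Its fixed point is
`L = θ (1 - η/(2β)) / (1 - η/(2β) + 2β)`, and `s_t - L = rᵗ (θ - L)` is the closed form. -/

lemma sub_mul_eq_of_increment_eq {R : Type*} [CommRing R] {x y : ℕ → R} (a : R)
    (hy : ∀ t, y (t + 1) = y t + a * (x (t + 1) - x t)) (t : ℕ) :
    y t - a * x t = y 0 - a * x 0 := by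
  induction t with
  | zero => rfl
  | succ t ih => rw [hy t, ← ih]; ring

lemma eq_fixedPoint_add_pow_mul_of_affine {R : Type*} [CommRing R] {u : ℕ → R} {r b L : R}
    (hu : ∀ t, u (t + 1) = r * u t + b) (hL : r * L + b = L) (t : ℕ) :
    u t = L + r ^ t * (u 0 - L) := by
  induction t with
  | zero => ring
  | succ t ih => rw [hu t, ih]; linear_combination hL

theorem toy_model_cep_closed_form_general (θ β η : ℝ)
    (hden : 1 - η / (2*β) + 2*β ≠ 0)
    (s th : ℕ → ℝ)
    (hs0 : s 0 = θ) (hth0 : th 0 = θ)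
    (hsrec : ∀ t, s (t+1) = (1/2 - β) * s t + th t / 2)
    (hthrec : ∀ t, th (t+1) = th t + (η / (2*β)) * (s (t+1) - s t)) :
    ∀ t : ℕ, s t = θ / (1 - η / (2*β) + 2*β)
        * (1 - η / (2*β) + 2*β * (1/2)^t * (1 - 2*β + η / (2*β))^t) := by
  set a := η / (2*β)
  have h_th : ∀ t, th t = (1 - a) * θ + a * s t := fun t => by
    have h := sub_mul_eq_of_increment_eq a hthrec t
    rw [hs0, hth0] at h
    linear_combination h
  have h_affine : ∀ t, s (t + 1) = (1/2 * (1 - 2*β + a)) * s t + (1 - a) * θ / 2 := fun t => by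
    rw [hsrec t, h_th t]; ring
  have h_fixed : (1/2 * (1 - 2*β + a)) * (θ * (1 - a) / (1 - a + 2*β)) + (1 - a) * θ / 2
      = θ * (1 - a) / (1 - a + 2*β) := by
    field_simp; ring
  intro t
  rw [eq_fixedPoint_add_pow_mul_of_affine h_affine h_fixed t, hs0, mul_pow]
  field_simp
  ring

/-- **Toy-model C-EP closed form.** For the toy C-EP dynamics, if
`1 − η/(2β) + 2β ≠ 0`, then
`s_t = (θ/(1 − η/(2β) + 2β)) (1 − η/(2β) + 2β (1/2)ᵗ (1 − 2β + η/(2β))ᵗ)`. -/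
theorem toy_model_cep_closed_form (θ β η : ℝ) (hβ : 0 < β) (hη : 0 < η)
    (hden : 1 - η / (2*β) + 2*β ≠ 0)
    (s th : ℕ → ℝ)
    (hs0 : s 0 = θ) (hth0 : th 0 = θ)
    (hsrec : ∀ t, s (t+1) = (1/2 - β) * s t + th t / 2)
    (hthrec : ∀ t, th (t+1) = th t + (η / (2*β)) * (s (t+1) - s t)) :
    ∀ t : ℕ, s t = θ / (1 - η / (2*β) + 2*β)
        * (1 - η / (2*β) + 2*β * (1/2)^t * (1 - 2*β + η / (2*β))^t) :=
  toy_model_cep_closed_form_general θ β η hden s th hs0 hth0 hsrec hthrec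
end

section
/- Toy-model C-EP normalized updates. In the toy C-EP dynamics, for all t ≥ 0: (θ_{t+1} − θ_t)/η = (1/2) · (s_{t+1} − s_t)/β, and (s_{t+1} − s_t)/β = −(θ/2ᵗ)(1 − 2β + η/(2β))ᵗ. In particular, lim_{β→0⁺} lim_{η→0⁺} (s_{t+1} − s_t)/β = −θ/2ᵗ and lim_{β→0⁺} lim_{η→0⁺} (θ_{t+1} − θ_t)/η = −θ/2^{t+1}. -/
open Filter Topology

/-! The increments `dₙ = s_{n+1} − s_n` form a geometric sequence: subtracting consecutive
`s`-updates and substituting the `θ`-update gives `d_{n+1} = r dₙ` with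
`r = (1 − 2β + η/(2β))/2`, while `d₀ = −βθ`. Dividing by `β` yields the closed form, and
`(θ_{t+1} − θ_t)/η = d_t/(2β)` is immediate from the `θ`-update. The closed form is a
polynomial in `η/(2β)` and in `β`, so both iterated limits are evaluations at `0`. -/

namespace ToyCEP

section Increments

variable {β η θ : ℝ} {s th : ℕ → ℝ}

theorem th_succ_sub (hthrec : ∀ n, th (n+1) = th n + (η / (2*β)) * (s (n+1) - s n)) (n : ℕ) :
    th (n+1) - th n = (η / (2*β)) * (s (n+1) - s n) := by
  rw [hthrec]; ring

theorem s_succ_sub_eq_pow_mul (hs0 : s 0 = θ) (hth0 : th 0 = θ)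
    (hsrec : ∀ n, s (n+1) = (1/2 - β) * s n + th n / 2)
    (hthrec : ∀ n, th (n+1) = th n + (η / (2*β)) * (s (n+1) - s n)) (n : ℕ) :
    s (n+1) - s n = ((1 - 2*β + η / (2*β)) / 2)^n * (-β * θ) := by
  induction n with
  | zero => rw [hsrec, hs0, hth0]; ring
  | succ n ih =>
    have hstep : s (n+2) - s (n+1) = (1/2 - β) * (s (n+1) - s n) + (th (n+1) - th n) / 2 := by
      rw [hsrec (n+1), hsrec n]; ring
    rw [hstep, th_succ_sub hthrec, ih, pow_succ]
    ring

theorem s_succ_sub_div_eq (hβ : β ≠ 0) (hs0 : s 0 = θ) (hth0 : th 0 = θ)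
    (hsrec : ∀ n, s (n+1) = (1/2 - β) * s n + th n / 2)
    (hthrec : ∀ n, th (n+1) = th n + (η / (2*β)) * (s (n+1) - s n)) (n : ℕ) :
    (s (n+1) - s n) / β = -(θ / 2^n) * (1 - 2*β + η / (2*β))^n := by
  rw [s_succ_sub_eq_pow_mul hs0 hth0 hsrec hthrec, div_pow]
  field_simp

theorem th_succ_sub_div_eq (hη : η ≠ 0)
    (hthrec : ∀ n, th (n+1) = th n + (η / (2*β)) * (s (n+1) - s n)) (n : ℕ) :
    (th (n+1) - th n) / η = (1/2) * ((s (n+1) - s n) / β) := by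
  rw [th_succ_sub hthrec]
  field_simp

end Increments

theorem tendsto_closedForm_nhdsGT_eta (θ β : ℝ) (t : ℕ) :
    Tendsto (fun η : ℝ => -(θ / 2^t) * (1 - 2*β + η / (2*β))^t) (𝓝[>] 0)
      (𝓝 (-(θ / 2^t) * (1 - 2*β)^t)) :=
  (Continuous.tendsto' (by fun_prop) 0 _ (by simp)).mono_left nhdsWithin_le_nhds

theorem tendsto_closedForm_nhdsGT_beta (θ : ℝ) (t : ℕ) :
    Tendsto (fun β : ℝ => -(θ / 2^t) * (1 - 2*β)^t) (𝓝[>] 0) (𝓝 (-(θ / 2^t))) :=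
  (Continuous.tendsto' (by fun_prop) 0 _ (by simp)).mono_left nhdsWithin_le_nhds

end ToyCEP

open ToyCEP in
/-- **Toy-model C-EP normalized updates.** For the toy C-EP dynamics (as functions of β, η):
`(θ_{t+1} − θ_t)/η = (1/2)(s_{t+1} − s_t)/β` and
`(s_{t+1} − s_t)/β = −(θ/2ᵗ)(1 − 2β + η/(2β))ᵗ`; in particular, the iterated limits
(η → 0⁺, then β → 0⁺) are `−θ/2ᵗ` and `−θ/2^{t+1}` respectively. -/
theorem toy_model_cep_updates (θ : ℝ)
    (s th : ℝ → ℝ → ℕ → ℝ)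
    (hs0 : ∀ β η, s β η 0 = θ) (hth0 : ∀ β η, th β η 0 = θ)
    (hsrec : ∀ β η t, s β η (t+1) = (1/2 - β) * s β η t + th β η t / 2)
    (hthrec : ∀ β η t, th β η (t+1) = th β η t + (η / (2*β)) * (s β η (t+1) - s β η t))
    (t : ℕ) :
    (∀ β η : ℝ, 0 < β → 0 < η →
      (th β η (t+1) - th β η t) / η = (1/2) * ((s β η (t+1) - s β η t) / β)
      ∧ (s β η (t+1) - s β η t) / β = -(θ / 2^t) * (1 - 2*β + η / (2*β))^t)
    ∧ (∃ gs : ℝ → ℝ,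
        (∀ β > (0:ℝ), Tendsto (fun η => (s β η (t+1) - s β η t) / β)
            (𝓝[>] (0:ℝ)) (𝓝 (gs β)))
        ∧ Tendsto gs (𝓝[>] (0:ℝ)) (𝓝 (-(θ / 2^t))))
    ∧ (∃ gθ : ℝ → ℝ,
        (∀ β > (0:ℝ), Tendsto (fun η => (th β η (t+1) - th β η t) / η)
            (𝓝[>] (0:ℝ)) (𝓝 (gθ β)))
        ∧ Tendsto gθ (𝓝[>] (0:ℝ)) (𝓝 (-(θ / 2^(t+1))))) := by
  have hS (β η : ℝ) (hβ : 0 < β) := s_succ_sub_div_eq (η := η) hβ.ne' (hs0 β η) (hth0 β η)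
    (hsrec β η) (hthrec β η) t
  have hTh (β η : ℝ) (hη : 0 < η) := th_succ_sub_div_eq hη.ne' (hthrec β η) t
  have hS_lim (β : ℝ) (hβ : 0 < β) :
      Tendsto (fun η => (s β η (t+1) - s β η t) / β) (𝓝[>] 0)
        (𝓝 (-(θ / 2^t) * (1 - 2*β)^t)) :=
    (tendsto_closedForm_nhdsGT_eta θ β t).congr fun η => (hS β η hβ).symm
  have hhalf : (1/2) * -(θ / 2^t) = -(θ / 2^(t+1)) := by rw [pow_succ]; ring
  refine ⟨fun β η hβ hη => ⟨hTh β η hη, hS β η hβ⟩,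
    ⟨_, hS_lim, tendsto_closedForm_nhdsGT_beta θ t⟩,
    ⟨fun β => (1/2) * (-(θ / 2^t) * (1 - 2*β)^t), fun β hβ => ?_,
      hhalf ▸ (tendsto_closedForm_nhdsGT_beta θ t).const_mul (1/2)⟩⟩
  refine ((hS_lim β hβ).const_mul (1/2)).congr' ?_
  filter_upwards [self_mem_nhdsWithin] with η hη
  exact (hTh β η hη).symm
end
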